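/- arXiv:1601.01361 — 2 statements merged into one kernel-verified Lean document; each statement's English description precedes it below -/
import Mathlib

section
/- Let (L, ‖·‖) be a lattice over A = k[t] of rank n with successive minima r₁ ≤ ... ≤ r_n, and let b₁,...,b_n ∈ L be A-linearly independent with ‖b_i‖ = r_i for all i. Then (b₁,...,b_n) is a reduced basis of L; in particular it generates L as an A-module. -/
/-!
Everything rests on one inequality: if `e • w = ∑ cᵢ • bᵢ` with `c_j ≠ 0`, then `‖w‖ ≥ r_j`.
Otherwise, if `p` is the first index with `r_p = r_j`, the vectors `b_i` (`i < p`) together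
with `w` form `p + 1` independent vectors of norm `< r_p`, contradicting minimality of `r_p`.

Reducedness: let `M = maxᵢ (deg cᵢ + rᵢ)`, attained at `j` with `d = deg c_j` least. Writing
`cᵢ = tᵈ qᵢ + sᵢ` with `deg sᵢ < d`, the inequality gives `‖tᵈ ∑ qᵢ bᵢ‖ ≥ d + r_j = M`, while
every term of `∑ sᵢ bᵢ` has norm `< M`; so `‖∑ cᵢ bᵢ‖ ≥ M` by the ultrametric inequality.

Generation: by maximality of the rank, `e • x = ∑ cᵢ • bᵢ` for some `e ≠ 0`. With
`y = x - ∑ (cᵢ / e) • bᵢ` we get `e • y = ∑ (cᵢ % e) • bᵢ`, and the inequality bounds each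
term by `deg (cᵢ % e) + rᵢ < deg e + ‖y‖ = ‖e • y‖` unless `y = 0`.
-/

/-- The degree function on `A = k[t]`, with `deg 0 = -∞`, valued in `ℝ ∪ {-∞}`. -/
noncomputable def degA {k : Type*} [Field k] (a : Polynomial k) : WithBot ℝ :=
  WithBot.map (fun n : ℕ => (n : ℝ)) a.degree

open Polynomial Finset

section LinearIndependent

variable {R M : Type*} [AddCommGroup M]

theorem LinearIndependent.exists_smul_mem_span_of_not_finCons [Ring R] [Module R M] {m : ℕ}
    {v : Fin m → M} (hv : LinearIndependent R v) {x : M}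
    (hx : ¬LinearIndependent R (Fin.cons x v : Fin (m + 1) → M)) :
    ∃ e : R, e ≠ 0 ∧ e • x ∈ Submodule.span R (Set.range v) := by
  by_contra! h
  refine hx (hv.finCons' x v fun c y hy hcy => by_contra fun hc => h c hc ?_)
  rw [eq_neg_of_add_eq_zero_left hcy]
  exact neg_mem hy

theorem LinearIndependent.finCons_comp_of_smul_eq_linearCombination [CommRing R]
    [NoZeroDivisors R] [Module R M] {ι : Type*} {b : ι → M} (hb : LinearIndependent R b)
    {m : ℕ} {f : Fin m → ι} (hf : Function.Injective f) {w : M} {e : R}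
    {c : ι →₀ R} (hw : e • w = Finsupp.linearCombination R b c) {j : ι} (hcj : c j ≠ 0)
    (hjf : j ∉ Set.range f) :
    LinearIndependent R (Fin.cons w (b ∘ f) : Fin (m + 1) → M) := by
  refine (hb.comp f hf).finCons' w _ fun a y hy hay => ?_
  rw [Set.range_comp, Finsupp.mem_span_image_iff_linearCombination] at hy
  obtain ⟨l, hl, rfl⟩ := hy
  have hcomb : a • c + e • l = 0 := linearIndependent_iff.1 hb _ <| by
    rw [map_add, map_smul, map_smul, ← hw, smul_comm, ← smul_add, hay, smul_zero]
  have hj := congrArg (· j) hcomb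
  simp only [Finsupp.coe_add, Finsupp.coe_smul, Pi.add_apply, Pi.smul_apply, smul_eq_mul,
    (Finsupp.mem_supported' _ _).1 hl j hjf, mul_zero, add_zero, Finsupp.coe_zero,
    Pi.zero_apply] at hj
  exact (mul_eq_zero.1 hj).resolve_right hcj

end LinearIndependent

theorem Monotone.exists_lt_iff_lt {ι β : Type*} [LinearOrder ι] [Fintype ι] [LinearOrder β]
    {r : ι → β} (hr : Monotone r) (j : ι) : ∃ p, ∀ i, i < p ↔ r i < r j := by
  classical
  let S := univ.filter fun i => r j ≤ r i
  have hjS : j ∈ S := by simp [S]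
  refine ⟨S.min' ⟨j, hjS⟩, fun i => ⟨fun hi => ?_, fun hi => ?_⟩⟩
  · by_contra! hji
    exact (S.min'_le i (by simpa [S] using hji)).not_gt hi
  · by_contra! hpi
    have hp := (mem_filter.1 (S.min'_mem ⟨j, hjS⟩)).2
    exact (hp.trans (hr hpi)).not_gt hi

section DegA

variable {k : Type*} [Field k]

theorem degA_eq_bot_iff {a : k[X]} : degA a = ⊥ ↔ a = 0 := by
  simp [degA]

theorem degA_le_degA_iff {a b : k[X]} : degA a ≤ degA b ↔ a.degree ≤ b.degree :=
  WithBot.map_le_iff _ (by simp)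

theorem degA_lt_degA_iff {a b : k[X]} : degA a < degA b ↔ a.degree < b.degree := by
  simp only [lt_iff_le_not_ge, degA_le_degA_iff]

theorem degA_neg_one : degA (-1 : k[X]) = 0 := by
  simp [degA]

end DegA

structure IsDegreeNorm (k : Type*) {L : Type*} [Field k] [AddCommGroup L] [Module k[X] L]
    (N : L → WithBot ℝ) : Prop where
  add_le : ∀ x y, N (x + y) ≤ max (N x) (N y)
  smul : ∀ (a : k[X]) x, N (a • x) = degA a + N x
  eq_bot_iff : ∀ x, N x = ⊥ ↔ x = 0

namespace IsDegreeNorm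

variable {k L : Type*} [Field k] [AddCommGroup L] [Module k[X] L] {N : L → WithBot ℝ}
  (hN : IsDegreeNorm k N)
include hN

theorem map_zero : N 0 = ⊥ :=
  (hN.eq_bot_iff 0).2 rfl

theorem map_neg (x : L) : N (-x) = N x := by
  rw [← neg_one_smul k[X] x, hN.smul, degA_neg_one, zero_add]

theorem sum_le {ι : Type*} (s : Finset ι) (f : ι → L) :
    N (∑ i ∈ s, f i) ≤ s.sup fun i => N (f i) := by
  classical
  induction s using Finset.induction_on with
  | empty => simp [hN.map_zero]
  | insert i s hi ih =>
    rw [sum_insert hi, sup_insert]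
    exact (hN.add_le _ _).trans (max_le_max le_rfl ih)

theorem sum_smul_le {ι : Type*} [Fintype ι] (c : ι → k[X]) (b : ι → L) :
    N (∑ i, c i • b i) ≤ univ.sup fun i => degA (c i) + N (b i) := by
  simpa only [hN.smul] using hN.sum_le univ fun i => c i • b i

theorem add_eq_left {x y : L} (h : N y < N x) : N (x + y) = N x := by
  refine le_antisymm ((hN.add_le x y).trans (max_le le_rfl h.le)) ?_
  have hx := hN.add_le (x + y) (-y)
  rw [add_neg_cancel_right, hN.map_neg] at hx
  exact (le_max_iff.1 hx).resolve_right h.not_ge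

end IsDegreeNorm

/-- Together with `norm_eq`, the last field says that `r i` is the `(i + 1)`-st successive minimum
of `N`, attained by `b i`. -/
structure AttainsSuccessiveMinima (k : Type*) {L : Type*} [Field k] [AddCommGroup L]
    [Module k[X] L] (N : L → WithBot ℝ) {n : ℕ} (b : Fin n → L) (r : Fin n → ℝ) : Prop where
  linearIndependent : LinearIndependent k[X] b
  norm_eq : ∀ i, N (b i) = r i
  monotone : Monotone r
  le_sup_of_linearIndependent : ∀ (i : Fin n) (x : Fin (i.1 + 1) → L),
    LinearIndependent k[X] x → (r i : WithBot ℝ) ≤ univ.sup fun j => N (x j)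

namespace AttainsSuccessiveMinima

variable {k L : Type*} [Field k] [AddCommGroup L] [Module k[X] L] {N : L → WithBot ℝ} {n : ℕ}
  {b : Fin n → L} {r : Fin n → ℝ} (hb : AttainsSuccessiveMinima k N b r)
include hb

theorem norm_ne_bot (i : Fin n) : N (b i) ≠ ⊥ := by
  simp [hb.norm_eq]

theorem le_of_smul_eq_sum {w : L} {e : k[X]} {c : Fin n → k[X]}
    (hw : e • w = ∑ i, c i • b i) {j : Fin n} (hcj : c j ≠ 0) : (r j : WithBot ℝ) ≤ N w := by
  by_contra! hlt
  obtain ⟨p, hp⟩ := hb.monotone.exists_lt_iff_lt j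
  have hpj : p ≤ j := not_lt.1 fun h => lt_irrefl _ ((hp j).1 h)
  let x : Fin (p + 1) → L := Fin.cons w (b ∘ Fin.castLE p.is_lt.le)
  have hx : LinearIndependent k[X] x := by
    refine hb.linearIndependent.finCons_comp_of_smul_eq_linearCombination
      (Fin.castLE_injective _) (e := e)
      (c := (Finsupp.linearEquivFunOnFinite k[X] k[X] _).symm c) ?_ hcj ?_
    · rw [hw, Finsupp.linearCombination_eq_fintype_linearCombination_apply,
        Fintype.linearCombination_apply]
    · rintro ⟨l, rfl⟩
      exact (show Fin.castLE _ l < p from l.is_lt).not_ge hpj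
  have hsup : (univ.sup fun l => N (x l)) < r j := by
    refine (Finset.sup_lt_iff (WithBot.bot_lt_coe _)).2 fun l _ => ?_
    cases l using Fin.cases with
    | zero => simpa [x] using hlt
    | succ l =>
      simp only [x, Fin.cons_succ, Function.comp_apply, hb.norm_eq, WithBot.coe_lt_coe]
      exact (hp _).1 l.is_lt
  have hjp : r j ≤ r p := not_lt.1 fun h => lt_irrefl _ ((hp p).2 h)
  exact (hb.le_sup_of_linearIndependent p x hx).not_gt (hsup.trans_le (WithBot.coe_le_coe.2 hjp))

variable (hN : IsDegreeNorm k N)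
include hN

theorem norm_sum_smul (c : Fin n → k[X]) :
    N (∑ i, c i • b i) = univ.sup fun i => degA (c i) + N (b i) := by
  refine le_antisymm (hN.sum_smul_le c b) ?_
  set M := univ.sup fun i => degA (c i) + N (b i) with hM
  obtain hMbot | hMbot := eq_or_ne M ⊥
  · simp [hMbot]
  obtain ⟨j, hjM, hjmin⟩ : ∃ j, degA (c j) + N (b j) = M ∧
      ∀ i, degA (c i) + N (b i) = M → (c j).degree ≤ (c i).degree := by
    obtain ⟨i, -, hi⟩ := Finset.lt_sup_iff.1 (bot_lt_iff_ne_bot.2 hMbot)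
    obtain ⟨i, -, hiM⟩ := exists_mem_eq_sup univ ⟨i, mem_univ i⟩ fun i => degA (c i) + N (b i)
    obtain ⟨j, hj, hjmin⟩ := (univ.filter fun i => degA (c i) + N (b i) = M).exists_min_image
      (fun i => (c i).degree) ⟨i, by simp [hM, hiM]⟩
    exact ⟨j, (mem_filter.1 hj).2, fun i hi => hjmin i (by simp [hi])⟩
  have hcj : c j ≠ 0 := by
    rintro hcj
    apply hMbot
    rw [← hjM, hcj, degA_eq_bot_iff.2 rfl, WithBot.bot_add]
  set d := (c j).natDegree
  have hXd : (X ^ d : k[X]).degree = (c j).degree := by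
    rw [degree_X_pow, degree_eq_natDegree hcj]
  have hsplit : ∑ i, c i • b i =
      (X ^ d : k[X]) • ∑ i, (c i /ₘ X ^ d) • b i + ∑ i, (c i %ₘ X ^ d) • b i := by
    rw [smul_sum, ← sum_add_distrib]
    refine sum_congr rfl fun i _ => ?_
    rw [smul_smul, ← add_smul, add_comm, modByMonic_add_div]
  have hquot : M ≤ N ((X ^ d : k[X]) • ∑ i, (c i /ₘ X ^ d) • b i) := by
    have hqj : c j /ₘ X ^ d ≠ 0 := by
      rw [Ne, divByMonic_eq_zero_iff (monic_X_pow d), hXd]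
      exact lt_irrefl _
    have hdegA : degA (X ^ d : k[X]) = degA (c j) := by rw [degA, degA, hXd]
    rw [hN.smul, ← hjM, hdegA, hb.norm_eq]
    gcongr
    exact hb.le_of_smul_eq_sum (one_smul _ _) hqj
  have hrem : N (∑ i, (c i %ₘ X ^ d) • b i) < M := by
    refine (hN.sum_smul_le _ b).trans_lt <| (Finset.sup_lt_iff (bot_lt_iff_ne_bot.2 hMbot)).2
      fun i _ => ?_
    obtain hiM | hiM := eq_or_ne (degA (c i) + N (b i)) M
    · rw [← hiM]
      refine WithBot.add_lt_add_right (hb.norm_ne_bot i) (degA_lt_degA_iff.2 ?_)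
      exact (degree_modByMonic_lt _ (monic_X_pow d)).trans_le (hXd.trans_le (hjmin i hiM))
    · have hlt : degA (c i) + N (b i) < M :=
        (Finset.le_sup (f := fun i => degA (c i) + N (b i)) (mem_univ i)).lt_of_ne hiM
      refine lt_of_le_of_lt ?_ hlt
      gcongr
      exact degA_le_degA_iff.2 degree_modByMonic_le_left
  rw [hsplit, hN.add_eq_left (hrem.trans_le hquot)]
  exact hquot

theorem span_eq_top (hrank : ¬∃ x : Fin (n + 1) → L, LinearIndependent k[X] x) :
    Submodule.span k[X] (Set.range b) = ⊤ := by
  refine eq_top_iff.2 fun x _ => ?_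
  obtain ⟨e, he, hex⟩ :=
    hb.linearIndependent.exists_smul_mem_span_of_not_finCons fun h => hrank ⟨_, h⟩
  obtain ⟨c, hc⟩ := (Submodule.mem_span_range_iff_exists_fun _).1 hex
  set y := x - ∑ i, (c i / e) • b i
  have hey : e • y = ∑ i, (c i % e) • b i := by
    rw [smul_sub, ← hc, smul_sum, ← sum_sub_distrib]
    refine sum_congr rfl fun i _ => ?_
    rw [smul_smul, ← sub_smul]
    congr 1
    linear_combination -EuclideanDomain.div_add_mod (c i) e
  suffices hy : y = 0 by
    rw [show x = ∑ i, (c i / e) • b i from sub_eq_zero.1 hy]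
    exact sum_mem fun i _ => Submodule.smul_mem _ _ (Submodule.subset_span ⟨i, rfl⟩)
  by_contra hy
  have hNy : N y ≠ ⊥ := mt (hN.eq_bot_iff y).1 hy
  have hey_bot : degA e + N y ≠ ⊥ := WithBot.add_ne_bot.2 ⟨mt degA_eq_bot_iff.1 he, hNy⟩
  have hlt : (univ.sup fun i => degA (c i % e) + N (b i)) < degA e + N y := by
    refine (Finset.sup_lt_iff (bot_lt_iff_ne_bot.2 hey_bot)).2 fun i _ => ?_
    obtain hi | hi := eq_or_ne (c i % e) 0
    · simpa [hi, degA] using bot_lt_iff_ne_bot.2 hey_bot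
    calc degA (c i % e) + N (b i) < degA e + N (b i) :=
          WithBot.add_lt_add_right (hb.norm_ne_bot i) (degA_lt_degA_iff.2 (degree_mod_lt _ he))
      _ ≤ degA e + N y := by
          gcongr
          rw [hb.norm_eq]
          exact hb.le_of_smul_eq_sum hey hi
  have := (hN.sum_smul_le _ b).trans_lt hlt
  rw [← hey, hN.smul] at this
  exact lt_irrefl _ this

end AttainsSuccessiveMinima

theorem stmt7_general {k : Type*} [Field k] {L : Type*} [AddCommGroup L]
    [Module (Polynomial k) L]
    (N : L → WithBot ℝ)
    (hadd : ∀ x y : L, N (x + y) ≤ max (N x) (N y))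
    (hsmul : ∀ (a : Polynomial k) (x : L), N (a • x) = degA a + N x)
    (hzero : ∀ x : L, N x = ⊥ ↔ x = 0)
    (n : ℕ) (b : Fin n → L) (hb : LinearIndependent (Polynomial k) b)
    (hrank : ¬ ∃ x : Fin (n + 1) → L, LinearIndependent (Polynomial k) x)
    (r : Fin n → ℝ) (hr : ∀ i, N (b i) = ((r i : ℝ) : WithBot ℝ)) (hmono : Monotone r)
    (hmin : ∀ (i : Fin n) (x : Fin (i.1 + 1) → L), LinearIndependent (Polynomial k) x →
      ((r i : ℝ) : WithBot ℝ) ≤ Finset.univ.sup (fun j => N (x j))) :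
    Submodule.span (Polynomial k) (Set.range b) = ⊤ ∧
    ∀ a : Fin n → Polynomial k,
      N (∑ i, a i • b i) = Finset.univ.sup (fun i => degA (a i) + N (b i)) := by
  have hN : IsDegreeNorm k N := ⟨hadd, hsmul, hzero⟩
  have hbr : AttainsSuccessiveMinima k N b r := ⟨hb, hr, hmono, hmin⟩
  exact ⟨hbr.span_eq_top hN hrank, hbr.norm_sum_smul hN⟩

/-- In a lattice `(L,‖·‖)` over `A = k[t]` of rank `n`, any `A`-linearly
independent family `b₁,…,b_n` whose lengths attain the successive minima `r₁ ≤ ⋯ ≤ r_n`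
is a reduced basis of `L`: it generates `L` and is reduced. -/
theorem stmt7 {k : Type*} [Field k] {L : Type*} [AddCommGroup L]
    [Module (Polynomial k) L] [Module k L] [IsScalarTower k (Polynomial k) L]
    [Module.Finite (Polynomial k) L]
    (N : L → WithBot ℝ)
    (hadd : ∀ x y : L, N (x + y) ≤ max (N x) (N y))
    (hsmul : ∀ (a : Polynomial k) (x : L), N (a • x) = degA a + N x)
    (hzero : ∀ x : L, N x = ⊥ ↔ x = 0)
    (hfin : ∀ r : ℝ, ∃ S : Finset L,
      {x : L | N x ≤ (r : ℝ)} ⊆ (Submodule.span k (S : Set L) : Set L))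
    (n : ℕ) (b : Fin n → L) (hb : LinearIndependent (Polynomial k) b)
    (hrank : ¬ ∃ x : Fin (n + 1) → L, LinearIndependent (Polynomial k) x)
    (r : Fin n → ℝ) (hr : ∀ i, N (b i) = ((r i : ℝ) : WithBot ℝ)) (hmono : Monotone r)
    (hmin : ∀ (i : Fin n) (x : Fin (i.1 + 1) → L), LinearIndependent (Polynomial k) x →
      ((r i : ℝ) : WithBot ℝ) ≤ Finset.univ.sup (fun j => N (x j))) :
    Submodule.span (Polynomial k) (Set.range b) = ⊤ ∧
    ∀ a : Fin n → Polynomial k,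
      N (∑ i, a i • b i) = Finset.univ.sup (fun i => degA (a i) + N (b i)) :=
  stmt7_general N hadd hsmul hzero n b hb hrank r hr hmono hmin
end

section
/- Let -1 < r₁ < ... < r_κ ≤ 0 be real numbers and m₁,...,m_κ positive integers with n = m₁ + ... + m_κ. The isometry group of E = ⊥_{l=1}^κ K^{m_l}(r_l) equals the orthonormal group O(m₁,...,m_κ, A_∞), consisting of matrices T ∈ GL_n(A_∞) whose block decomposition (T_{ij}) according to the partition satisfies T_{ii} ∈ GL_{m_i}(A_∞) for all i and T_{ij} ∈ m_∞^{m_i × m_j} for all j > i. -/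
open scoped Classical in
/-- The degree function `|·| = -v_∞` on `K = k(t)`, with `|0| = -∞`. -/
noncomputable def degK {k : Type*} [Field k] (a : RatFunc k) : WithBot ℝ :=
  if a = 0 then ⊥ else ((a.intDegree : ℝ) : WithBot ℝ)

/-!
An isometry is injective and its inverse is again an isometry. Testing on basis vectors, a
matrix does not increase the norm exactly when `deg T_pq + r_q ≤ r_p` for all entries; since
`-1 < r₁ < ⋯ < r_κ ≤ 0`, this says that the entries lie in `A_∞` and those of the blocks above
the diagonal in `m_∞`. So `T` is an isometry iff `T` and `T⁻¹` both have this shape. Reduced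
modulo `m_∞` such matrices become block triangular, and the inverse of a block triangular
matrix is block triangular; hence `T⁻¹` has the shape iff `det T ∈ A_∞ˣ`. The determinant of
the reduction is the product of those of its diagonal blocks, so these are units as well.
-/

open Finset Matrix IsLocalRing OrderDual

namespace Matrix

theorem BlockTriangular.of_mul_eq_one {ι α R : Type*} [Fintype ι] [DecidableEq ι] [LinearOrder α]
    [CommRing R] {M N : Matrix ι ι R} {b : ι → α} (hM : M.BlockTriangular b) (h : M * N = 1) :
    N.BlockTriangular b := by
  let := invertibleOfRightInverse M N h
  simpa [inv_eq_right_inv h] using blockTriangular_inv_of_blockTriangular hM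

variable {α : Type*} {β : α → Type*} [Fintype α] [LinearOrder α] [∀ a, Fintype (β a)]
  [∀ a, DecidableEq (β a)] {R : Type*} [CommRing R]

theorem det_eq_prod_det_blockDiag' {M : Matrix (Σ a, β a) (Σ a, β a) R}
    (hM : M.BlockTriangular fun p => toDual p.1) : M.det = ∏ a, (M.blockDiag' a).det := by
  rw [hM.det_fintype, ← (OrderDual.toDual (α := α)).prod_comp]
  exact prod_congr rfl fun a _ => (det_reindex_self (Equiv.sigmaSubtype a) _).symm

theorem isUnit_det_blockDiag' [IsLocalRing R] {M : Matrix (Σ a, β a) (Σ a, β a) R}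
    (hM : ((residue R).mapMatrix M).BlockTriangular fun p => toDual p.1) (hdet : IsUnit M.det)
    (a : α) : IsUnit (M.blockDiag' a).det := by
  rw [← residue_ne_zero_iff_isUnit, RingHom.map_det, det_eq_prod_det_blockDiag' hM] at hdet
  rw [← residue_ne_zero_iff_isUnit, RingHom.map_det]
  exact prod_ne_zero_iff.1 hdet a (mem_univ a)

end Matrix

namespace Valuation

variable {K Γ₀ : Type*} [Field K] [LinearOrderedCommGroupWithZero Γ₀] {v : Valuation K Γ₀}

theorem residue_eq_zero_iff_lt_one (x : v.valuationSubring) :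
    residue v.valuationSubring x = 0 ↔ v x < 1 := by
  rw [← not_iff_not, ← ne_eq, residue_ne_zero_iff_isUnit,
    (valuationSubring.integers v).isUnit_iff_valuation_eq_one, not_lt]
  exact ⟨ge_of_eq, x.2.antisymm⟩

theorem valuation_subtype_eq_one_iff (x : v.valuationSubring) :
    v (v.valuationSubring.subtype x) = 1 ↔ IsUnit x :=
  (valuationSubring.integers v).isUnit_iff_valuation_eq_one.symm

variable {α : Type*} {β : α → Type*}

variable (v) in
/-- Entries in the valuation ring, and in its maximal ideal above the diagonal blocks: the
matrices of `O(m₁, …, m_κ, 𝒪)` are those of this shape with unit determinant. -/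
def IsBlockIntegral [LT α] (M : Matrix (Σ a, β a) (Σ a, β a) K) : Prop :=
  (∀ p q, v (M p q) ≤ 1) ∧ ∀ p q, p.1 < q.1 → v (M p q) < 1

section
variable [Fintype α] [LinearOrder α] [∀ a, Fintype (β a)] [∀ a, DecidableEq (β a)]
  {M : Matrix (Σ a, β a) (Σ a, β a) K}

theorem isBlockIntegral_iff_exists_lift : v.IsBlockIntegral M ↔
    ∃ M' : Matrix (Σ a, β a) (Σ a, β a) v.valuationSubring,
      v.valuationSubring.subtype.mapMatrix M' = M ∧
        ((residue _).mapMatrix M').BlockTriangular fun p => toDual p.1 := by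
  constructor
  · rintro ⟨hint, hupper⟩
    exact ⟨fun p q => ⟨M p q, hint p q⟩, rfl, fun p q hqp =>
      (residue_eq_zero_iff_lt_one _).2 (hupper p q (toDual_lt_toDual.1 hqp))⟩
  · rintro ⟨M', rfl, hM'⟩
    exact ⟨fun p q => (M' p q).2, fun p q hpq =>
      (residue_eq_zero_iff_lt_one _).1 (hM' (toDual_lt_toDual.2 hpq))⟩

theorem exists_mul_eq_one_isBlockIntegral_iff :
    (∃ N, M * N = 1 ∧ v.IsBlockIntegral M ∧ v.IsBlockIntegral N) ↔
      v.IsBlockIntegral M ∧ v M.det = 1 := by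
  simp only [isBlockIntegral_iff_exists_lift]
  constructor
  · rintro ⟨_, hMN, ⟨M', rfl, hM'⟩, N', rfl, -⟩
    have hM'N' : M' * N' = 1 := map_injective Subtype.val_injective <|
      show v.valuationSubring.subtype.mapMatrix (M' * N') = v.valuationSubring.subtype.mapMatrix 1
      by rw [map_mul, map_one, hMN]
    refine ⟨⟨M', rfl, hM'⟩, ?_⟩
    rw [← RingHom.map_det, valuation_subtype_eq_one_iff]
    exact isUnit_det_of_right_inverse hM'N'
  · rintro ⟨⟨M', rfl, hM'⟩, hdet⟩
    rw [← RingHom.map_det, valuation_subtype_eq_one_iff] at hdet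
    have hinv : M' * M'⁻¹ = 1 := mul_nonsing_inv M' hdet
    refine ⟨v.valuationSubring.subtype.mapMatrix M'⁻¹, ?_, ⟨M', rfl, hM'⟩, M'⁻¹, rfl,
      hM'.of_mul_eq_one ?_⟩
    all_goals rw [← map_mul, hinv, map_one]

theorem IsBlockIntegral.valuation_det_blockDiag' (hM : v.IsBlockIntegral M) (hdet : v M.det = 1)
    (a : α) : v (M.blockDiag' a).det = 1 := by
  obtain ⟨M', rfl, hM'⟩ := isBlockIntegral_iff_exists_lift.1 hM
  rw [← RingHom.map_det, valuation_subtype_eq_one_iff] at hdet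
  have := (valuation_subtype_eq_one_iff _).2 (isUnit_det_blockDiag' hM' hdet a)
  rwa [RingHom.map_det] at this

end
end Valuation

section degK

variable {k : Type*} [Field k]

theorem degK_of_ne_zero {a : RatFunc k} (h : a ≠ 0) : degK a = ((a.intDegree : ℝ) : WithBot ℝ) :=
  if_neg h

@[simp]
theorem degK_zero : degK (0 : RatFunc k) = ⊥ := if_pos rfl

@[simp]
theorem degK_one : degK (1 : RatFunc k) = 0 := by
  rw [degK_of_ne_zero (one_ne_zero (α := RatFunc k)), RatFunc.intDegree_one]
  simp

theorem degK_eq_bot_iff {a : RatFunc k} : degK a = ⊥ ↔ a = 0 := by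
  rcases eq_or_ne a 0 with rfl | ha
  · simp
  · simp [degK_of_ne_zero ha, ha]

theorem degK_mul (a b : RatFunc k) : degK (a * b) = degK a + degK b := by
  rcases eq_or_ne a 0 with rfl | ha
  · simp
  rcases eq_or_ne b 0 with rfl | hb
  · simp
  rw [degK_of_ne_zero ha, degK_of_ne_zero hb, degK_of_ne_zero (mul_ne_zero ha hb),
    RatFunc.intDegree_mul ha hb]
  norm_cast

theorem degK_add_le (a b : RatFunc k) : degK (a + b) ≤ max (degK a) (degK b) := by
  rcases eq_or_ne a 0 with rfl | ha
  · simp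
  rcases eq_or_ne b 0 with rfl | hb
  · simp
  rcases eq_or_ne (a + b) 0 with hab | hab
  · simp [hab]
  rw [degK_of_ne_zero ha, degK_of_ne_zero hb, degK_of_ne_zero hab]
  exact_mod_cast RatFunc.intDegree_add_le hb hab

theorem degK_sum_add_le {ι : Type*} {s : Finset ι} {f : ι → RatFunc k} {t : ℝ} {c : WithBot ℝ}
    (h : ∀ i ∈ s, degK (f i) + t ≤ c) : degK (∑ i ∈ s, f i) + t ≤ c := by
  classical
  induction s using Finset.induction_on with
  | empty => simp
  | insert i s hi ih =>
    rw [sum_insert hi]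
    calc degK (f i + ∑ j ∈ s, f j) + t ≤ max (degK (f i)) (degK (∑ j ∈ s, f j)) + t := by
          gcongr; exact degK_add_le _ _
      _ = max (degK (f i) + t) (degK (∑ j ∈ s, f j) + t) := (max_add_add_right _ _ _).symm
      _ ≤ c := max_le (h i (mem_insert_self i s)) (ih fun j hj => h j (mem_insert_of_mem hj))

end degK

namespace RatFunc

variable {k : Type*} [Field k] [DecidableEq (RatFunc k)]

theorem inftyValuation_le_one_iff {a : RatFunc k} :
    inftyValuation k a ≤ 1 ↔ a = 0 ∨ a.intDegree ≤ 0 := by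
  rcases eq_or_ne a 0 with rfl | ha
  · simp
  · rw [inftyValuation_apply, inftyValuation_of_nonzero _ ha, ← WithZero.exp_zero,
      WithZero.exp_le_exp, or_iff_right ha]

theorem inftyValuation_lt_one_iff {a : RatFunc k} :
    inftyValuation k a < 1 ↔ a = 0 ∨ a.intDegree < 0 := by
  rcases eq_or_ne a 0 with rfl | ha
  · simp
  · rw [inftyValuation_apply, inftyValuation_of_nonzero _ ha, ← WithZero.exp_zero,
      WithZero.exp_lt_exp, or_iff_right ha]

theorem inftyValuation_eq_one_iff {a : RatFunc k} :
    inftyValuation k a = 1 ↔ a ≠ 0 ∧ a.intDegree = 0 := by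
  rcases eq_or_ne a 0 with rfl | ha
  · simp
  · rw [inftyValuation_apply, inftyValuation_of_nonzero _ ha, WithZero.exp_eq_one]
    exact (and_iff_right ha).symm

end RatFunc

section degNorm

variable {k : Type*} [Field k] {ι : Type*} [Fintype ι] (w : ι → ℝ)

/-- The norm of the orthogonal sum `⊥_p K(w p)`. -/
noncomputable def degNorm (v : ι → RatFunc k) : WithBot ℝ :=
  univ.sup fun p => degK (v p) + (w p : WithBot ℝ)

variable {w}

theorem degNorm_le_iff {v : ι → RatFunc k} {c : WithBot ℝ} :
    degNorm w v ≤ c ↔ ∀ p, degK (v p) + w p ≤ c := by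
  simp [degNorm]

theorem le_degNorm (v : ι → RatFunc k) (p : ι) : degK (v p) + w p ≤ degNorm w v :=
  le_sup (f := fun p => degK (v p) + (w p : WithBot ℝ)) (mem_univ p)

theorem degNorm_eq_bot_iff {v : ι → RatFunc k} : degNorm w v = ⊥ ↔ v = 0 := by
  simp [degNorm, WithBot.add_eq_bot, degK_eq_bot_iff, funext_iff]

theorem degNorm_single_one [DecidableEq ι] (p : ι) :
    degNorm w (Pi.single p (1 : RatFunc k)) = w p := by
  refine le_antisymm (degNorm_le_iff.2 fun q => ?_) ?_
  · rcases eq_or_ne q p with rfl | hq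
    · simp
    · simp [hq]
  · simpa using le_degNorm (w := w) (Pi.single p (1 : RatFunc k)) p

variable [DecidableEq ι] {M : Matrix ι ι (RatFunc k)}

theorem degNorm_vecMul_le_iff :
    (∀ v, degNorm w (v ᵥ* M) ≤ degNorm w v) ↔ ∀ p q, degK (M p q) + w q ≤ w p := by
  constructor
  · intro h p q
    simpa [degNorm_single_one] using (le_degNorm _ q).trans (h (Pi.single p 1))
  · refine fun h v => degNorm_le_iff.2 fun q => degK_sum_add_le fun p _ => ?_
    calc degK (v p * M p q) + w q = degK (v p) + (degK (M p q) + w q) := by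
          rw [degK_mul, add_assoc]
      _ ≤ degK (v p) + w p := by gcongr; exact h p q
      _ ≤ degNorm w v := le_degNorm v p

theorem degNorm_vecMul_eq_iff :
    (∀ v, degNorm w (v ᵥ* M) = degNorm w v) ↔ ∃ N, M * N = 1 ∧
      (∀ v, degNorm w (v ᵥ* M) ≤ degNorm w v) ∧ ∀ v, degNorm w (v ᵥ* N) ≤ degNorm w v := by
  constructor
  · intro h
    have hdet : IsUnit M.det := by
      refine isUnit_iff_ne_zero.2 fun h0 => ?_
      obtain ⟨v, hv, hvM⟩ := exists_vecMul_eq_zero_iff.2 h0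
      exact hv (degNorm_eq_bot_iff.1 ((h v).symm.trans (hvM ▸ degNorm_eq_bot_iff.2 rfl)))
    refine ⟨M⁻¹, mul_nonsing_inv M hdet, fun v => (h v).le, fun v => ?_⟩
    rw [← h, vecMul_vecMul, nonsing_inv_mul M hdet, vecMul_one]
  · rintro ⟨N, hMN, hM, hN⟩ v
    refine (hM v).antisymm ?_
    calc degNorm w v = degNorm w (v ᵥ* M ᵥ* N) := by rw [vecMul_vecMul, hMN, vecMul_one]
      _ ≤ degNorm w (v ᵥ* M) := hN _

end degNorm

section

variable {k : Type*} [Field k] [DecidableEq (RatFunc k)]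

theorem degK_add_le_iff {a : RatFunc k} {s t : ℝ} (hs : -1 < s) (hs' : s ≤ 0) (ht : -1 < t)
    (ht' : t ≤ 0) : degK a + t ≤ s ↔
      RatFunc.inftyValuation k a ≤ 1 ∧ (s < t → RatFunc.inftyValuation k a < 1) := by
  rcases eq_or_ne a 0 with rfl | ha
  · simp
  rw [RatFunc.inftyValuation_le_one_iff, RatFunc.inftyValuation_lt_one_iff, degK_of_ne_zero ha,
    ← WithBot.coe_add, WithBot.coe_le_coe]
  simp only [ha, false_or]
  -- `s - t ∈ (-1, 1)`, and `intDegree a` is an integer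
  constructor
  · intro h
    refine ⟨Int.lt_add_one_iff.1 ?_, fun hst => ?_⟩
    · exact_mod_cast (show (a.intDegree : ℝ) < 0 + 1 by linarith)
    · exact_mod_cast (show (a.intDegree : ℝ) < 0 by linarith)
  · rintro ⟨h0, h1⟩
    rcases lt_or_ge s t with hst | hst
    · have hd : (a.intDegree : ℝ) ≤ -1 := by exact_mod_cast Int.le_sub_one_of_lt (h1 hst)
      linarith
    · have hd : (a.intDegree : ℝ) ≤ 0 := by exact_mod_cast h0
      linarith

variable {α : Type*} {β : α → Type*} [LinearOrder α] {r : α → ℝ}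

theorem degK_add_le_iff_isBlockIntegral (hr1 : ∀ a, -1 < r a) (hr2 : ∀ a, r a ≤ 0)
    (hr : StrictMono r) {M : Matrix (Σ a, β a) (Σ a, β a) (RatFunc k)} :
    (∀ p q, degK (M p q) + r q.1 ≤ r p.1) ↔ (RatFunc.inftyValuation k).IsBlockIntegral M := by
  simp only [degK_add_le_iff (hr1 _) (hr2 _) (hr1 _) (hr2 _), hr.lt_iff_lt, forall_and]
  rfl

end

theorem stmt14_general {k : Type*} [Field k] (κ : ℕ) (m : Fin κ → ℕ)
    (r : Fin κ → ℝ) (hr1 : ∀ l, -1 < r l) (hr2 : ∀ l, r l ≤ 0) (hrmono : StrictMono r)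
    (T : Matrix ((l : Fin κ) × Fin (m l)) ((l : Fin κ) × Fin (m l)) (RatFunc k)) :
    (∀ v : ((l : Fin κ) × Fin (m l)) → RatFunc k,
        (Finset.univ.sup fun p : (l : Fin κ) × Fin (m l) =>
            degK (Matrix.vecMul v T p) + ((r p.1 : ℝ) : WithBot ℝ)) =
        (Finset.univ.sup fun p : (l : Fin κ) × Fin (m l) =>
            degK (v p) + ((r p.1 : ℝ) : WithBot ℝ))) ↔
    ((∀ p q, T p q = 0 ∨ (T p q).intDegree ≤ 0) ∧
      T.det ≠ 0 ∧ T.det.intDegree = 0 ∧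
      (∀ l : Fin κ,
        (Matrix.of fun a b : Fin (m l) => T ⟨l, a⟩ ⟨l, b⟩).det ≠ 0 ∧
        (Matrix.of fun a b : Fin (m l) => T ⟨l, a⟩ ⟨l, b⟩).det.intDegree = 0 ∧
        (∀ a b : Fin (m l), T ⟨l, a⟩ ⟨l, b⟩ = 0 ∨ (T ⟨l, a⟩ ⟨l, b⟩).intDegree ≤ 0)) ∧
      (∀ p q : (l : Fin κ) × Fin (m l), p.1 < q.1 →
        T p q = 0 ∨ (T p q).intDegree < 0)) := by
  classical
  change (∀ v, degNorm (fun p => r p.1) (v ᵥ* T) = degNorm (fun p => r p.1) v) ↔ _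
  rw [degNorm_vecMul_eq_iff]
  simp only [degNorm_vecMul_le_iff, degK_add_le_iff_isBlockIntegral hr1 hr2 hrmono]
  rw [Valuation.exists_mul_eq_one_isBlockIntegral_iff]
  constructor
  · rintro ⟨hT, hdet⟩
    have hblock := hT.valuation_det_blockDiag' hdet
    obtain ⟨hint, hupper⟩ := hT
    simp only [RatFunc.inftyValuation_le_one_iff,
      RatFunc.inftyValuation_lt_one_iff, RatFunc.inftyValuation_eq_one_iff]
      at hint hupper hdet hblock
    exact ⟨hint, hdet.1, hdet.2, fun l => ⟨(hblock l).1, (hblock l).2, fun a b => hint _ _⟩,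
      hupper⟩
  · rintro ⟨hint, hdet_ne, hdet_deg, -, hupper⟩
    simp only [Valuation.IsBlockIntegral, RatFunc.inftyValuation_le_one_iff,
      RatFunc.inftyValuation_lt_one_iff, RatFunc.inftyValuation_eq_one_iff]
    exact ⟨⟨hint, hupper⟩, hdet_ne, hdet_deg⟩

/-- For `-1 < r₁ < ⋯ < r_κ ≤ 0` and positive multiplicities `m_l`, the
isometry group of `E = ⊥_{l} K^{m_l}(r_l)` (coordinates indexed by `Σ l, Fin (m l)`, norm
`‖v‖ = max_p (deg v_p + r_{block p})`) is the orthonormal group `O(m₁,…,m_κ, A_∞)`: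
matrices in `GL_n(A_∞)` whose diagonal blocks lie in `GL_{m_l}(A_∞)` and whose blocks
above the diagonal have entries in `m_∞` (degree `< 0`). -/
theorem stmt14 {k : Type*} [Field k] (κ : ℕ) (m : Fin κ → ℕ) (hm : ∀ l, 0 < m l)
    (r : Fin κ → ℝ) (hr1 : ∀ l, -1 < r l) (hr2 : ∀ l, r l ≤ 0) (hrmono : StrictMono r)
    (T : Matrix ((l : Fin κ) × Fin (m l)) ((l : Fin κ) × Fin (m l)) (RatFunc k)) :
    (∀ v : ((l : Fin κ) × Fin (m l)) → RatFunc k,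
        (Finset.univ.sup fun p : (l : Fin κ) × Fin (m l) =>
            degK (Matrix.vecMul v T p) + ((r p.1 : ℝ) : WithBot ℝ)) =
        (Finset.univ.sup fun p : (l : Fin κ) × Fin (m l) =>
            degK (v p) + ((r p.1 : ℝ) : WithBot ℝ))) ↔
    ((∀ p q, T p q = 0 ∨ (T p q).intDegree ≤ 0) ∧
      T.det ≠ 0 ∧ T.det.intDegree = 0 ∧
      (∀ l : Fin κ,
        (Matrix.of fun a b : Fin (m l) => T ⟨l, a⟩ ⟨l, b⟩).det ≠ 0 ∧
        (Matrix.of fun a b : Fin (m l) => T ⟨l, a⟩ ⟨l, b⟩).det.intDegree = 0 ∧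
        (∀ a b : Fin (m l), T ⟨l, a⟩ ⟨l, b⟩ = 0 ∨ (T ⟨l, a⟩ ⟨l, b⟩).intDegree ≤ 0)) ∧
      (∀ p q : (l : Fin κ) × Fin (m l), p.1 < q.1 →
        T p q = 0 ∨ (T p q).intDegree < 0)) :=
  stmt14_general κ m r hr1 hr2 hrmono T
end
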